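/- Construction B: let l ∈ {0,1,2} and S₁, S₂ ⊆ F₂ ⊕ F₄^m be disjoint sets such that wt(y+z) is odd for y ∈ S₁, z ∈ S₂, and wt(y+z) is even for y, z in the same S_i. Define S̃₁ = {[y,0] : y ∈ S₁} ∪ {[y,ω^l] : y ∈ S₂} and S̃₂ = {[y,0] : y ∈ S₂} ∪ {[y,ω^l] : y ∈ S₁} in F₂ ⊕ F₄^{m+1}. Then S̃₁, S̃₂ are disjoint, wt(y+z) is odd for y ∈ S̃₁, z ∈ S̃₂, and wt(y+z) is even for y,z in the same S̃_i. -/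

import Mathlib

def add4 : Fin 4 → Fin 4 → Fin 4 :=
  ![![0, 1, 2, 3], ![1, 0, 3, 2], ![2, 3, 0, 1], ![3, 2, 1, 0]]

def addV {m : ℕ} (p q : ZMod 2 × (Fin m → Fin 4)) : ZMod 2 × (Fin m → Fin 4) :=
  (p.1 + q.1, fun k => add4 (p.2 k) (q.2 k))

def wtV {m : ℕ} (p : ZMod 2 × (Fin m → Fin 4)) : ℕ :=
  (if p.1 ≠ 0 then 1 else 0) + (Finset.univ.filter fun k => p.2 k ≠ 0).card

def app {m : ℕ} (y : ZMod 2 × (Fin m → Fin 4)) (ξ : Fin 4) :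
    ZMod 2 × (Fin (m + 1) → Fin 4) :=
  (y.1, Fin.snoc y.2 ξ)

/-!
Appending symbols `a, b` to `y, z` adds `1` to the weight of the sum exactly when `a ≠ b`, since
`a + b = 0` in `F₄` only for `a = b`. Two points of the same `S̃ᵢ` carry equal symbols iff they
come from the same `Sⱼ`, and two points of different `S̃ᵢ` carry equal symbols iff they come from
different `Sⱼ`; in both cases the parity flip produces exactly the required parity.
-/

lemma add4_comm (a b : Fin 4) : add4 a b = add4 b a := by
  revert a b; decide

lemma add4_eq_zero_iff {a b : Fin 4} : add4 a b = 0 ↔ a = b := by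
  revert a b; decide

section

variable {m : ℕ}

lemma addV_comm (y z : ZMod 2 × (Fin m → Fin 4)) : addV y z = addV z y :=
  Prod.ext (add_comm _ _) (funext fun _ => add4_comm _ _)

lemma app_inj {y z : ZMod 2 × (Fin m → Fin 4)} {a b : Fin 4} :
    app y a = app z b ↔ y = z ∧ a = b := by
  simp only [app, Fin.snoc_inj, Prod.ext_iff, and_assoc]

lemma addV_app_app (y z : ZMod 2 × (Fin m → Fin 4)) (a b : Fin 4) :
    addV (app y a) (app z b) = app (addV y z) (add4 a b) := by
  refine Prod.ext rfl (funext fun k => ?_)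
  refine Fin.lastCases ?_ (fun i => ?_) k <;> simp [addV, app]

lemma wtV_app (y : ZMod 2 × (Fin m → Fin 4)) (a : Fin 4) :
    wtV (app y a) = wtV y + if a ≠ 0 then 1 else 0 := by
  unfold wtV app
  rw [Finset.card_filter, Finset.card_filter, Fin.sum_univ_castSucc]
  simp only [Fin.snoc_castSucc, Fin.snoc_last, add_assoc]

lemma wtV_addV_app_app (y z : ZMod 2 × (Fin m → Fin 4)) (a b : Fin 4) :
    wtV (addV (app y a) (app z b)) = wtV (addV y z) + if a ≠ b then 1 else 0 := by
  rw [addV_app_app, wtV_app]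
  simp only [ne_eq, add4_eq_zero_iff]

/-- `S̃₁` of Construction B; `S̃₂` is `extendB ξ S₂ S₁`. -/
def extendB (ξ : Fin 4) (S₁ S₂ : Set (ZMod 2 × (Fin m → Fin 4))) :
    Set (ZMod 2 × (Fin (m + 1) → Fin 4)) :=
  (fun y => app y 0) '' S₁ ∪ (fun y => app y ξ) '' S₂

variable {ξ : Fin 4} {S₁ S₂ : Set (ZMod 2 × (Fin m → Fin 4))}

lemma odd_wtV_addV_comm (hodd : ∀ y ∈ S₁, ∀ z ∈ S₂, Odd (wtV (addV y z))) :
    ∀ y ∈ S₂, ∀ z ∈ S₁, Odd (wtV (addV y z)) :=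
  fun y hy z hz => addV_comm z y ▸ hodd z hz y hy

lemma disjoint_extendB (hξ : ξ ≠ 0) (hdisj : Disjoint S₁ S₂) :
    Disjoint (extendB ξ S₁ S₂) (extendB ξ S₂ S₁) := by
  rw [Set.disjoint_left]
  rintro _ (⟨y, hy, rfl⟩ | ⟨y, hy, rfl⟩) (⟨z, hz, h⟩ | ⟨z, hz, h⟩) <;> rw [app_inj] at h
  · exact hdisj.ne_of_mem hy hz h.1.symm
  · exact hξ h.2
  · exact hξ h.2.symm
  · exact hdisj.ne_of_mem hz hy h.1

lemma odd_wtV_addV_extendB (hξ : ξ ≠ 0) (hodd : ∀ y ∈ S₁, ∀ z ∈ S₂, Odd (wtV (addV y z)))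
    (heven₁ : ∀ y ∈ S₁, ∀ z ∈ S₁, Even (wtV (addV y z)))
    (heven₂ : ∀ y ∈ S₂, ∀ z ∈ S₂, Even (wtV (addV y z))) :
    ∀ y ∈ extendB ξ S₁ S₂, ∀ z ∈ extendB ξ S₂ S₁, Odd (wtV (addV y z)) := by
  rintro _ (⟨y, hy, rfl⟩ | ⟨y, hy, rfl⟩) _ (⟨z, hz, rfl⟩ | ⟨z, hz, rfl⟩) <;>
    simp only [wtV_addV_app_app, ne_eq, hξ, hξ.symm, not_true_eq_false, not_false_eq_true,
      ite_true, ite_false, add_zero]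
  · exact hodd y hy z hz
  · exact (heven₁ y hy z hz).add_one
  · exact (heven₂ y hy z hz).add_one
  · exact odd_wtV_addV_comm hodd y hy z hz

lemma even_wtV_addV_extendB (hξ : ξ ≠ 0) (hodd : ∀ y ∈ S₁, ∀ z ∈ S₂, Odd (wtV (addV y z)))
    (heven₁ : ∀ y ∈ S₁, ∀ z ∈ S₁, Even (wtV (addV y z)))
    (heven₂ : ∀ y ∈ S₂, ∀ z ∈ S₂, Even (wtV (addV y z))) :
    ∀ y ∈ extendB ξ S₁ S₂, ∀ z ∈ extendB ξ S₁ S₂, Even (wtV (addV y z)) := by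
  rintro _ (⟨y, hy, rfl⟩ | ⟨y, hy, rfl⟩) _ (⟨z, hz, rfl⟩ | ⟨z, hz, rfl⟩) <;>
    simp only [wtV_addV_app_app, ne_eq, hξ, hξ.symm, not_true_eq_false, not_false_eq_true,
      ite_true, ite_false, add_zero]
  · exact heven₁ y hy z hz
  · exact (hodd y hy z hz).add_one
  · exact (odd_wtV_addV_comm hodd y hy z hz).add_one
  · exact heven₂ y hy z hz

end

/-- Construction B: S̃₁ = {[y,0] : y ∈ S₁} ∪ {[y,ω^l] : y ∈ S₂},
S̃₂ = {[y,0] : y ∈ S₂} ∪ {[y,ω^l] : y ∈ S₁}, where ω^l is a nonzero ξ ∈ F₄. -/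
theorem constructionB (m : ℕ) (ξ : Fin 4) (hξ : ξ ≠ 0)
    (S₁ S₂ : Set (ZMod 2 × (Fin m → Fin 4)))
    (hdisj : Disjoint S₁ S₂)
    (hodd : ∀ y ∈ S₁, ∀ z ∈ S₂, Odd (wtV (addV y z)))
    (heven₁ : ∀ y ∈ S₁, ∀ z ∈ S₁, Even (wtV (addV y z)))
    (heven₂ : ∀ y ∈ S₂, ∀ z ∈ S₂, Even (wtV (addV y z))) :
    let T₁ : Set (ZMod 2 × (Fin (m + 1) → Fin 4)) :=
      (fun y => app y 0) '' S₁ ∪ (fun y => app y ξ) '' S₂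
    let T₂ : Set (ZMod 2 × (Fin (m + 1) → Fin 4)) :=
      (fun y => app y 0) '' S₂ ∪ (fun y => app y ξ) '' S₁
    Disjoint T₁ T₂ ∧
    (∀ y ∈ T₁, ∀ z ∈ T₂, Odd (wtV (addV y z))) ∧
    (∀ y ∈ T₁, ∀ z ∈ T₁, Even (wtV (addV y z))) ∧
    (∀ y ∈ T₂, ∀ z ∈ T₂, Even (wtV (addV y z))) :=
  ⟨disjoint_extendB hξ hdisj,
    odd_wtV_addV_extendB hξ hodd heven₁ heven₂,
    even_wtV_addV_extendB hξ hodd heven₁ heven₂,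
    even_wtV_addV_extendB hξ (odd_wtV_addV_comm hodd) heven₂ heven₁⟩
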